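/- arXiv:2109.01748 — 2 statements merged into one kernel-verified Lean document; each statement's English description precedes it below -/
import Mathlib

section
/- Let Z₁,…,Z_m be i.i.d. with law μ on Ω, let ν ≪ μ with κ(ν‖μ) ≤ K, and define the reweighted random measure ν'_m = (1/m)∑_{i=1}^m (dν/dμ)(Z_i) δ_{Z_i}. Let F be a finite family of measurable functions from Ω to [−1,1]. If m ≥ δ^{−2} K |F| / γ, then with probability at least 1 − γ, max_{f∈F} |∫ f dν'_m − ∫ f dν| ≤ δ. -/
open MeasureTheory ProbabilityTheory Finset

/-!
For a fixed `f`, the reweighted statistic is the sample mean of the i.i.d. variables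
`(dν/dμ)(Zᵢ) f(Zᵢ)`, whose mean is `∫ f dν` and whose variance is at most `∫ (dν/dμ)² dμ ≤ K`
because `|f| ≤ 1`. Chebyshev's inequality bounds the probability of a deviation larger than `δ`
by `K / (m δ²) ≤ γ / |F|`, and a union bound over `F` finishes the proof.
-/

section SampleMean

variable {Ω Θ ι : Type*} [MeasurableSpace Ω] [MeasurableSpace Θ] [Fintype ι]
  {P : Measure Θ} {μ : Measure Ω} {Z : ι → Θ → Ω} {g : Ω → ℝ}

lemma integral_sum_comp_of_measurePreserving [IsFiniteMeasure P]
    (hZ : ∀ i, MeasurePreserving (Z i) P μ) (hg : MemLp g 2 μ) :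
    ∫ θ, ∑ i, g (Z i θ) ∂P = Fintype.card ι * ∫ x, g x ∂μ := by
  have hint : ∀ i, Integrable (fun θ => g (Z i θ)) P := fun i =>
    (hg.comp_measurePreserving (hZ i)).integrable one_le_two
  have hcomp : ∀ i, ∫ θ, g (Z i θ) ∂P = ∫ x, g x ∂μ := fun i => by
    rw [← (hZ i).map_eq, integral_map (hZ i).aemeasurable]
    exact (hZ i).map_eq ▸ hg.aestronglyMeasurable
  simp [integral_finsetSum _ fun i _ => hint i, hcomp]

lemma variance_sum_comp_of_measurePreserving (hZ : ∀ i, MeasurePreserving (Z i) P μ)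
    (hindep : Pairwise fun i j => IndepFun (Z i) (Z j) P) (hgm : Measurable g)
    (hg : MemLp g 2 μ) :
    variance (∑ i, fun θ => g (Z i θ)) P = Fintype.card ι * variance g μ := by
  rw [IndepFun.variance_sum (X := fun i θ => g (Z i θ))
    (fun i _ => hg.comp_measurePreserving (hZ i))
    fun i _ j _ hij => (hindep hij).comp hgm hgm]
  simp [(hZ _).variance_fun_comp hgm.aemeasurable]

lemma meas_lt_abs_sampleMean_sub_le [IsFiniteMeasure P] [Nonempty ι]
    (hZ : ∀ i, MeasurePreserving (Z i) P μ) (hindep : Pairwise fun i j => IndepFun (Z i) (Z j) P)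
    (hgm : Measurable g) (hg : MemLp g 2 μ) {δ : ℝ} (hδ : 0 < δ) :
    P {θ | δ < |(Fintype.card ι : ℝ)⁻¹ * ∑ i, g (Z i θ) - ∫ x, g x ∂μ|} ≤
      ENNReal.ofReal (variance g μ / (Fintype.card ι * δ ^ 2)) := by
  set n : ℝ := (Fintype.card ι : ℝ)
  have hn : 0 < n := by positivity
  set S : Θ → ℝ := ∑ i, fun θ => g (Z i θ)
  have hSapp : ∀ θ, S θ = ∑ i, g (Z i θ) := fun θ => Finset.sum_apply _ _ _
  have hSmem : MemLp S 2 P := memLp_finsetSum' _ fun i _ => hg.comp_measurePreserving (hZ i)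
  have hSmean : P[S] = n * ∫ x, g x ∂μ := by
    simp only [hSapp, integral_sum_comp_of_measurePreserving hZ hg, n]
  have hsub : {θ | δ < |n⁻¹ * ∑ i, g (Z i θ) - ∫ x, g x ∂μ|} ⊆ {θ | n * δ ≤ |S θ - P[S]|} := by
    intro θ hθ
    simp only [Set.mem_ofPred_eq] at hθ ⊢
    rw [hSmean, hSapp]
    rw [show n⁻¹ * ∑ i, g (Z i θ) - ∫ x, g x ∂μ = n⁻¹ * (∑ i, g (Z i θ) - n * ∫ x, g x ∂μ) by
      field_simp, abs_mul, abs_of_pos (inv_pos.2 hn), inv_mul_eq_div, lt_div_iff₀ hn] at hθ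
    linarith
  calc P {θ | δ < |n⁻¹ * ∑ i, g (Z i θ) - ∫ x, g x ∂μ|}
      ≤ P {θ | n * δ ≤ |S θ - P[S]|} := measure_mono hsub
    _ ≤ ENNReal.ofReal (variance S P / (n * δ) ^ 2) :=
      meas_ge_le_variance_div_sq hSmem (by positivity)
    _ = ENNReal.ofReal (variance g μ / (n * δ ^ 2)) := by
      rw [variance_sum_comp_of_measurePreserving hZ hindep hgm hg]
      congr 1
      field_simp
      ring

end SampleMean

section BoundedMultiplier

variable {Ω : Type*} [MeasurableSpace Ω] {μ : Measure Ω} {w f : Ω → ℝ}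

lemma MeasureTheory.MemLp.mul_of_abs_le_one {p : ENNReal} (hw : MemLp w p μ)
    (hf : AEStronglyMeasurable f μ) (hf1 : ∀ x, |f x| ≤ 1) : MemLp (fun x => w x * f x) p μ :=
  hw.of_le (hw.1.mul hf) (.of_forall fun x => by
    simpa only [Real.norm_eq_abs, abs_mul] using mul_le_of_le_one_right (abs_nonneg _) (hf1 x))

lemma variance_mul_le_integral_sq [IsProbabilityMeasure μ] (hw : MemLp w 2 μ)
    (hf : AEStronglyMeasurable f μ) (hf1 : ∀ x, |f x| ≤ 1) :
    variance (fun x => w x * f x) μ ≤ ∫ x, w x ^ 2 ∂μ := by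
  have hsq_le : ∀ x, (w x * f x) ^ 2 ≤ w x ^ 2 := fun x => by
    rw [mul_pow, ← sq_abs (f x)]
    exact mul_le_of_le_one_right (sq_nonneg _) (pow_le_one₀ (abs_nonneg _) (hf1 x))
  exact (variance_le_expectation_sq (hw.1.mul hf)).trans
    (integral_mono (hw.mul_of_abs_le_one hf hf1).integrable_sq hw.integrable_sq hsq_le)

end BoundedMultiplier

lemma one_le_integral_rnDeriv_sq {Ω : Type*} [MeasurableSpace Ω] {μ ν : Measure Ω}
    [IsProbabilityMeasure μ] [IsProbabilityMeasure ν] (hac : ν ≪ μ)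
    (hmem : MemLp (fun x => (ν.rnDeriv μ x).toReal) 2 μ) :
    1 ≤ ∫ x, (ν.rnDeriv μ x).toReal ^ 2 ∂μ := by
  have hvar := variance_nonneg (fun x => (ν.rnDeriv μ x).toReal) μ
  rw [variance_eq_sub hmem, Measure.integral_toReal_rnDeriv hac] at hvar
  simpa using hvar

lemma one_sub_le_toReal_measure_setOf_forall {α ι : Type*} [MeasurableSpace α] {P : Measure α}
    [IsProbabilityMeasure P] (s : Finset ι) (p : ι → α → Prop) {γ : ℝ} (hγ : 0 ≤ γ)
    (h : ∑ i ∈ s, P {x | ¬ p i x} ≤ ENNReal.ofReal γ) :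
    1 - γ ≤ (P {x | ∀ i ∈ s, p i x}).toReal := by
  set G := {x | ∀ i ∈ s, p i x}
  have hcompl : Gᶜ ⊆ ⋃ i ∈ s, {x | ¬ p i x} := fun x hx => by
    simpa [G] using hx
  have hGc : P.real Gᶜ ≤ γ :=
    ENNReal.toReal_le_of_le_ofReal hγ
      (((measure_mono hcompl).trans (measure_biUnion_finset_le s _)).trans h)
  have hunion : 1 ≤ P.real G + P.real Gᶜ := by
    simpa using measureReal_union_le (μ := P) G Gᶜ
  rw [← measureReal_def]
  linarith

theorem reweighted_uniform_deviation_general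
    {Ω : Type*} [MeasurableSpace Ω]
    (μ ν : Measure Ω) [IsProbabilityMeasure μ] [IsProbabilityMeasure ν]
    (hac : ν ≪ μ) (K : ℝ)
    (hκint : Integrable (fun x => ((ν.rnDeriv μ x).toReal) ^ 2) μ)
    (hκ : ∫ x, ((ν.rnDeriv μ x).toReal) ^ 2 ∂μ ≤ K)
    {Θ : Type*} [MeasurableSpace Θ] (P : Measure Θ) [IsProbabilityMeasure P]
    (m : ℕ) (Z : Fin m → Θ → Ω) (hZmeas : ∀ i, Measurable (Z i))
    (hZlaw : ∀ i, Measure.map (Z i) P = μ)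
    (hZindep : iIndepFun Z P)
    (F : Finset (Ω → ℝ))
    (hFmeas : ∀ f ∈ F, Measurable f) (hFbdd : ∀ f ∈ F, ∀ x, |f x| ≤ 1)
    (δ γ : ℝ) (hδ : δ ∈ Set.Ioo (0 : ℝ) 1) (hγ : γ ∈ Set.Ioo (0 : ℝ) 1)
    (hm : (δ ^ 2)⁻¹ * K * (F.card : ℝ) / γ ≤ (m : ℝ)) :
    1 - γ ≤ (P {θ | ∀ f ∈ F,
        |(m : ℝ)⁻¹ * ∑ i, (ν.rnDeriv μ (Z i θ)).toReal * f (Z i θ) -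
          ∫ x, f x ∂ν| ≤ δ}).toReal := by
  have hwm : Measurable fun x => (ν.rnDeriv μ x).toReal :=
    (Measure.measurable_rnDeriv ν μ).ennreal_toReal
  have hw : MemLp (fun x => (ν.rnDeriv μ x).toReal) 2 μ :=
    (memLp_two_iff_integrable_sq hwm.aestronglyMeasurable).2 hκint
  -- `K ≥ 1` makes the left-hand side of `hm` positive, hence `m > 0`.
  have hK : 1 ≤ K := (one_le_integral_rnDeriv_sq hac hw).trans hκ
  have hZ : ∀ i, MeasurePreserving (Z i) P μ := fun i => ⟨hZmeas i, hZlaw i⟩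
  obtain ⟨hδ0, -⟩ := hδ
  obtain ⟨hγ0, -⟩ := hγ
  refine one_sub_le_toReal_measure_setOf_forall F _ hγ0.le
    ((sum_le_card_nsmul F _ (ENNReal.ofReal (γ / #F)) fun f hf => ?_).trans ?_)
  · have hF : (0 : ℝ) < #F := Nat.cast_pos.2 (card_pos.2 ⟨f, hf⟩)
    have hm0 : 0 < m := Nat.cast_pos.1 ((by positivity : (0 : ℝ) < _).trans_le hm)
    have : Nonempty (Fin m) := ⟨⟨0, hm0⟩⟩
    have hdev := meas_lt_abs_sampleMean_sub_le (g := fun x => (ν.rnDeriv μ x).toReal * f x) hZ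
      (fun i j hij => hZindep.indepFun hij) (hwm.mul (hFmeas f hf))
      (hw.mul_of_abs_le_one (hFmeas f hf).aestronglyMeasurable (hFbdd f hf)) hδ0
    simp only [integral_toReal_rnDeriv_mul hac, Fintype.card_fin] at hdev
    simp only [not_le]
    refine hdev.trans (ENNReal.ofReal_le_ofReal ?_)
    have hvar := (variance_mul_le_integral_sq hw (hFmeas f hf).aestronglyMeasurable
      (hFbdd f hf)).trans hκ
    calc _ ≤ K / (m * δ ^ 2) := by gcongr
      _ ≤ γ / #F := by
        rw [div_le_div_iff₀ (by positivity) hF]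
        rw [div_le_iff₀ hγ0, inv_mul_eq_div, div_mul_eq_mul_div,
          div_le_iff₀ (by positivity)] at hm
        linarith
  · rcases F.eq_empty_or_nonempty with rfl | hF
    · simp
    rw [nsmul_eq_mul, ← ENNReal.ofReal_natCast, ← ENNReal.ofReal_mul (by positivity),
      mul_div_cancel₀ _ (by positivity)]

/-- Uniform deviation of linear statistics of the reweighted empirical measure
ν'_m = (1/m)∑ (dν/dμ)(Z_i) δ_{Z_i}: if m ≥ δ⁻² K|F|/γ and κ(ν‖μ) ≤ K, then with
probability at least 1 − γ all linear statistics of ν'_m are within δ of those of ν. -/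
theorem reweighted_uniform_deviation
    {Ω : Type*} [MeasurableSpace Ω]
    (μ ν : Measure Ω) [IsProbabilityMeasure μ] [IsProbabilityMeasure ν]
    (hac : ν ≪ μ) (K : ℝ)
    (hκint : Integrable (fun x => ((ν.rnDeriv μ x).toReal) ^ 2) μ)
    (hκ : ∫ x, ((ν.rnDeriv μ x).toReal) ^ 2 ∂μ ≤ K)
    {Θ : Type*} [MeasurableSpace Θ] (P : Measure Θ) [IsProbabilityMeasure P]
    (m : ℕ) (Z : Fin m → Θ → Ω) (hZmeas : ∀ i, Measurable (Z i))
    (hZlaw : ∀ i, Measure.map (Z i) P = μ)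
    (hZindep : iIndepFun Z P)
    (F : Finset (Ω → ℝ)) (hFne : F.Nonempty)
    (hFmeas : ∀ f ∈ F, Measurable f) (hFbdd : ∀ f ∈ F, ∀ x, |f x| ≤ 1)
    (δ γ : ℝ) (hδ : δ ∈ Set.Ioo (0 : ℝ) 1) (hγ : γ ∈ Set.Ioo (0 : ℝ) 1)
    (hm : (δ ^ 2)⁻¹ * K * (F.card : ℝ) / γ ≤ (m : ℝ)) :
    1 - γ ≤ (P {θ | ∀ f ∈ F,
        |(m : ℝ)⁻¹ * ∑ i, (ν.rnDeriv μ (Z i θ)).toReal * f (Z i θ) -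
          ∫ x, f x ∂ν| ≤ δ}).toReal :=
  reweighted_uniform_deviation_general μ ν hac K hκint hκ P m Z hZmeas hZlaw hZindep F hFmeas hFbdd
    δ γ hδ hγ hm
end

section
/- Suppose for every pair of databases D₁, D₂ differing in one element, ‖A(D₁) − A(D₂)‖₁ ≤ Δ, where A maps databases to ℝ^N. Then the mechanism M(D) = A(D) + (λ₁,…,λ_N), with λ_i i.i.d. Laplace(σ) noise, is (Δ/σ)-differentially private: for all such D₁, D₂ and measurable S ⊆ ℝ^N, P(M(D₁) ∈ S) ≤ e^{Δ/σ} P(M(D₂) ∈ S). -/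
open MeasureTheory ProbabilityTheory

/-!
By independence, the noise vector has the product density `∏ i, p (x i)` with
`p t = exp (-|t| / σ) / (2σ)`; by translation invariance of Lebesgue measure, `M(D)` then has
density `y ↦ ∏ i, p (y i - A(D) i)`. The triangle inequality gives `p s ≤ exp (|s - t| / σ) * p t`,
so the density of `M(D₁)` is pointwise at most `exp (‖A(D₁) - A(D₂)‖₁ / σ) ≤ exp (Δ / σ)` times
that of `M(D₂)`; integrating over `S` gives the claim.
-/

open scoped ENNReal

namespace MeasureTheory

theorem lintegral_fin_nat_prod_eq_prod {n : ℕ} {E : Type*} [MeasurableSpace E]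
    {μ : Fin n → Measure E} [∀ i, SigmaFinite (μ i)] {f : Fin n → E → ℝ≥0∞}
    (hf : ∀ i, Measurable (f i)) :
    ∫⁻ x : Fin n → E, ∏ i, f i (x i) ∂Measure.pi μ = ∏ i, ∫⁻ x, f i x ∂μ i := by
  induction n with
  | zero => simp
  | succ n ih =>
    calc _ = ∫⁻ x : E × (Fin n → E), f 0 x.1 * ∏ i : Fin n, f i.succ (x.2 i)
            ∂(μ 0).prod (Measure.pi fun i ↦ μ i.succ) := by
          rw [← (measurePreserving_piFinSuccAbove μ 0).symm.lintegral_comp_emb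
            (MeasurableEquiv.measurableEmbedding _)]
          simp_rw [MeasurableEquiv.piFinSuccAbove_symm_apply, Fin.insertNthEquiv,
            Fin.prod_univ_succ, Fin.insertNth_zero, Equiv.coe_fn_mk, Fin.cons_succ,
            Fin.zero_succAbove, cast_eq, Fin.cons_zero]
      _ = (∫⁻ x, f 0 x ∂μ 0) * ∏ i : Fin n, ∫⁻ x, f i.succ x ∂μ i.succ := by
          rw [← ih fun i ↦ hf i.succ]
          exact lintegral_prod_mul (hf 0).aemeasurable <|
            (Finset.measurable_prod _ fun (i : Fin n) _ ↦
              (hf i.succ).comp (measurable_pi_apply i)).aemeasurable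
      _ = ∏ i, ∫⁻ x, f i x ∂μ i := (Fin.prod_univ_succ fun i ↦ ∫⁻ x, f i x ∂μ i).symm

theorem lintegral_fintype_prod_eq_prod {ι E : Type*} [Fintype ι] [MeasurableSpace E]
    {μ : ι → Measure E} [∀ i, SigmaFinite (μ i)] {f : ι → E → ℝ≥0∞}
    (hf : ∀ i, Measurable (f i)) :
    ∫⁻ x : ι → E, ∏ i, f i (x i) ∂Measure.pi μ = ∏ i, ∫⁻ x, f i x ∂μ i := by
  let e := (Fintype.equivFin ι).symm
  rw [← (measurePreserving_piCongrLeft _ e).lintegral_comp_emb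
    (MeasurableEquiv.measurableEmbedding _)]
  simp_rw [← e.prod_comp, MeasurableEquiv.coe_piCongrLeft, Equiv.piCongrLeft_apply_apply]
  exact lintegral_fin_nat_prod_eq_prod fun i ↦ hf (e i)

theorem Measure.pi_withDensity {ι E : Type*} [Fintype ι] [MeasurableSpace E]
    {μ : ι → Measure E} [∀ i, SigmaFinite (μ i)] {f : ι → E → ℝ≥0∞} (hf : ∀ i, Measurable (f i))
    [∀ i, SigmaFinite ((μ i).withDensity (f i))] :
    Measure.pi (fun i ↦ (μ i).withDensity (f i)) =
      (Measure.pi μ).withDensity fun x ↦ ∏ i, f i (x i) := by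
  refine Measure.pi_eq fun s hs ↦ ?_
  classical
  have h_indicator : (Set.univ.pi s).indicator (fun x ↦ ∏ i, f i (x i)) =
      fun x ↦ ∏ i, (s i).indicator (f i) (x i) := by
    ext x
    simp only [Set.indicator, Set.mem_univ_pi, Finset.prod_ite_zero, Finset.mem_univ, true_implies]
  rw [withDensity_apply _ (.univ_pi hs), ← lintegral_indicator (.univ_pi hs), h_indicator,
    lintegral_fintype_prod_eq_prod fun i ↦ (hf i).indicator (hs i)]
  simp_rw [lintegral_indicator (hs _), withDensity_apply _ (hs _)]

theorem Measure.map_add_left_withDensity {G : Type*} [MeasurableSpace G] [AddGroup G]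
    [MeasurableAdd G] (μ : Measure G) [μ.IsAddLeftInvariant] {f : G → ℝ≥0∞} (hf : Measurable f)
    (a : G) : (μ.withDensity f).map (a + ·) = μ.withDensity fun y ↦ f (-a + y) := by
  ext s hs
  rw [map_apply (measurable_const_add a) hs, withDensity_apply _ (measurable_const_add a hs),
    withDensity_apply _ hs, ← (measurePreserving_add_left μ a).setLIntegral_comp_preimage hs
      (f := fun y ↦ f (-a + y)) (hf.comp (measurable_const_add (-a)))]
  simp_rw [neg_add_cancel_left]

theorem Measure.withDensity_le_smul_withDensity {α : Type*} [MeasurableSpace α] (μ : Measure α)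
    {f g : α → ℝ≥0∞} {c : ℝ≥0∞} (hc : c ≠ ∞) (hfg : ∀ x, f x ≤ c * g x) :
    μ.withDensity f ≤ c • μ.withDensity g :=
  (withDensity_mono (.of_forall hfg)).trans_eq (withDensity_smul' c g hc)

end MeasureTheory

theorem ProbabilityTheory.iIndepFun.map_eq_withDensity_prod {ι E Θ : Type*} [Fintype ι]
    [MeasurableSpace E] [MeasurableSpace Θ] {P : Measure Θ} {X : ι → Θ → E}
    (hindep : iIndepFun X P) (hX : ∀ i, AEMeasurable (X i) P) {μ : ι → Measure E}
    [∀ i, SigmaFinite (μ i)] {f : ι → E → ℝ≥0∞} (hf : ∀ i, Measurable (f i))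
    [∀ i, SigmaFinite ((μ i).withDensity (f i))]
    (hlaw : ∀ i, P.map (X i) = (μ i).withDensity (f i)) :
    P.map (fun θ i ↦ X i θ) = (Measure.pi μ).withDensity fun x ↦ ∏ i, f i (x i) := by
  rw [hindep.map_fun_eq_pi_map hX, funext hlaw, Measure.pi_withDensity hf]

noncomputable def laplacePDFReal (σ t : ℝ) : ℝ :=
  (2 * σ)⁻¹ * Real.exp (-|t| / σ)

lemma laplacePDFReal_nonneg {σ : ℝ} (hσ : 0 ≤ σ) (t : ℝ) : 0 ≤ laplacePDFReal σ t := by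
  unfold laplacePDFReal
  positivity

@[fun_prop]
lemma measurable_laplacePDFReal (σ : ℝ) : Measurable (laplacePDFReal σ) := by
  unfold laplacePDFReal
  fun_prop

lemma laplacePDFReal_le_exp_mul {σ : ℝ} (hσ : 0 ≤ σ) (s t : ℝ) :
    laplacePDFReal σ s ≤ Real.exp (|s - t| / σ) * laplacePDFReal σ t := by
  have h_exp : Real.exp (-|s| / σ) ≤ Real.exp (|s - t| / σ) * Real.exp (-|t| / σ) := by
    rw [← Real.exp_add, ← add_div, Real.exp_le_exp]
    gcongr
    linarith [abs_sub_abs_le_abs_sub t s, abs_sub_comm s t]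
  unfold laplacePDFReal
  calc (2 * σ)⁻¹ * Real.exp (-|s| / σ)
      ≤ (2 * σ)⁻¹ * (Real.exp (|s - t| / σ) * Real.exp (-|t| / σ)) := by gcongr
    _ = Real.exp (|s - t| / σ) * ((2 * σ)⁻¹ * Real.exp (-|t| / σ)) := by ring

lemma prod_laplacePDFReal_le_exp_mul {ι : Type*} [Fintype ι] {σ d : ℝ} (hσ : 0 ≤ σ)
    {x y : ι → ℝ} (hxy : ∑ i, |x i - y i| ≤ d) :
    ∏ i, laplacePDFReal σ (x i) ≤ Real.exp (d / σ) * ∏ i, laplacePDFReal σ (y i) := by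
  have h_nonneg : 0 ≤ ∏ i, laplacePDFReal σ (y i) :=
    Finset.prod_nonneg fun i _ ↦ laplacePDFReal_nonneg hσ _
  calc ∏ i, laplacePDFReal σ (x i)
      ≤ ∏ i, Real.exp (|x i - y i| / σ) * laplacePDFReal σ (y i) :=
        Finset.prod_le_prod (fun i _ ↦ laplacePDFReal_nonneg hσ _)
          fun i _ ↦ laplacePDFReal_le_exp_mul hσ _ _
    _ = Real.exp ((∑ i, |x i - y i|) / σ) * ∏ i, laplacePDFReal σ (y i) := by
        rw [Finset.prod_mul_distrib, Finset.sum_div, Real.exp_sum]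
    _ ≤ Real.exp (d / σ) * ∏ i, laplacePDFReal σ (y i) := by gcongr

theorem laplacian_mechanism_privacy_general
    {D : Type*} (Neighbor : D → D → Prop) (N : ℕ) (A : D → (Fin N → ℝ))
    (σ Δ : ℝ) (hσ : 0 < σ)
    (hΔ : ∀ D₁ D₂, Neighbor D₁ D₂ → ∑ i, |A D₁ i - A D₂ i| ≤ Δ)
    {Θ : Type*} [MeasurableSpace Θ] (P : Measure Θ)
    (lam : Fin N → Θ → ℝ) (hmeas : ∀ i, Measurable (lam i))
    (hlaw : ∀ i, Measure.map (lam i) P =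
      volume.withDensity (fun t => ENNReal.ofReal ((2 * σ)⁻¹ * Real.exp (-|t| / σ))))
    (hindep : iIndepFun lam P)
    (D₁ D₂ : D) (hnb : Neighbor D₁ D₂)
    (S : Set (Fin N → ℝ)) (hS : MeasurableSet S) :
    P {θ | (fun i => A D₁ i + lam i θ) ∈ S} ≤
      ENNReal.ofReal (Real.exp (Δ / σ)) * P {θ | (fun i => A D₂ i + lam i θ) ∈ S} := by
  set noise : Θ → Fin N → ℝ := fun θ i ↦ lam i θ
  have h_noise : Measurable noise := measurable_pi_lambda _ hmeas
  have h_law_noise : P.map noise =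
      volume.withDensity fun x ↦ ∏ i, ENNReal.ofReal (laplacePDFReal σ (x i)) :=
    hindep.map_eq_withDensity_prod (μ := fun _ ↦ volume)
      (f := fun _ t ↦ ENNReal.ofReal (laplacePDFReal σ t)) (fun i ↦ (hmeas i).aemeasurable)
      (fun _ ↦ (measurable_laplacePDFReal σ).ennreal_ofReal) hlaw
  have h_law_output (a : Fin N → ℝ) : P.map (fun θ ↦ a + noise θ) =
      volume.withDensity fun y ↦ ∏ i, ENNReal.ofReal (laplacePDFReal σ (-a i + y i)) := by
    rw [show (fun θ ↦ a + noise θ) = (a + ·) ∘ noise from rfl,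
      ← Measure.map_map (measurable_const_add a) h_noise, h_law_noise,
      Measure.map_add_left_withDensity _ (by fun_prop)]
    rfl
  have h_density (y : Fin N → ℝ) :
      ∏ i, ENNReal.ofReal (laplacePDFReal σ (-A D₁ i + y i)) ≤
        ENNReal.ofReal (Real.exp (Δ / σ)) *
          ∏ i, ENNReal.ofReal (laplacePDFReal σ (-A D₂ i + y i)) := by
    simp_rw [← ENNReal.ofReal_prod_of_nonneg fun i _ ↦ laplacePDFReal_nonneg hσ.le _,
      ← ENNReal.ofReal_mul (Real.exp_nonneg _)]
    refine ENNReal.ofReal_le_ofReal (prod_laplacePDFReal_le_exp_mul hσ.le ?_)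
    simpa [neg_add_eq_sub, abs_sub_comm] using hΔ D₁ D₂ hnb
  have h_le := Measure.withDensity_le_smul_withDensity volume ENNReal.ofReal_ne_top h_density
  rw [← h_law_output, ← h_law_output] at h_le
  have h_le_S := h_le S
  rwa [Measure.smul_apply, smul_eq_mul, Measure.map_apply (by fun_prop) hS,
    Measure.map_apply (by fun_prop) hS] at h_le_S

/-- Laplacian mechanism: if ‖A(D₁) − A(D₂)‖₁ ≤ Δ for neighboring databases, then the
mechanism that adds i.i.d. Laplace(σ) noise to each coordinate of A(D) is
(Δ/σ)-differentially private. -/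
theorem laplacian_mechanism_privacy
    {D : Type*} (Neighbor : D → D → Prop) (N : ℕ) (A : D → (Fin N → ℝ))
    (σ Δ : ℝ) (hσ : 0 < σ)
    (hΔ : ∀ D₁ D₂, Neighbor D₁ D₂ → ∑ i, |A D₁ i - A D₂ i| ≤ Δ)
    {Θ : Type*} [MeasurableSpace Θ] (P : Measure Θ) [IsProbabilityMeasure P]
    (lam : Fin N → Θ → ℝ) (hmeas : ∀ i, Measurable (lam i))
    (hlaw : ∀ i, Measure.map (lam i) P =
      volume.withDensity (fun t => ENNReal.ofReal ((2 * σ)⁻¹ * Real.exp (-|t| / σ))))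
    (hindep : iIndepFun lam P)
    (D₁ D₂ : D) (hnb : Neighbor D₁ D₂)
    (S : Set (Fin N → ℝ)) (hS : MeasurableSet S) :
    P {θ | (fun i => A D₁ i + lam i θ) ∈ S} ≤
      ENNReal.ofReal (Real.exp (Δ / σ)) * P {θ | (fun i => A D₂ i + lam i θ) ∈ S} :=
  laplacian_mechanism_privacy_general Neighbor N A σ Δ hσ hΔ P lam hmeas hlaw hindep D₁ D₂ hnb S hS
end
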